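/- Let X be an almost surely bounded random vector in ℝ^p, ε a real random variable independent of X with E[ε²] < ∞ and E[g_τ(ε)] = 0, and C a random variable independent of the pair (ε, X). Set T = exp(X^⊤β⁰ + ε) for some β⁰ ∈ ℝ^p, δ = 1_{T ≤ C}, Y = min(T, C), and G_0(t) = P(C > t). Assume G_0 is continuous and G_0(T) ≥ ζ_0 > 0 almost surely. Then the weighted expectile score has mean zero: E[ (δ / G_0(Y)) · g_τ(ε) · X ] = 0 (componentwise), where on the event {δ = 1} one has Y = T. -/

import Mathlib

/-!
Conditionally on `(ε, X)` the censoring time `C` keeps its law `ν`, so the weight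
`δ / G₀(Y) = 1_{T ≤ C} / ν[T, ∞)` has conditional mean one, provided `G₀(t) = ν(t, ∞)`
agrees with `ν[t, ∞)`; this is what continuity of `G₀` buys. The weighted score therefore
has the mean of the uncensored score `g_τ(ε) X`, which factors as `E[g_τ(ε)] E[X] = 0`
since `ε` and `X` are independent.
-/

open MeasureTheory ProbabilityTheory

noncomputable section

/-- `g_τ(x) = -2τx 1_{x≥0} - 2(1-τ)x 1_{x<0}`. -/
def gExp (τ x : ℝ) : ℝ := if 0 ≤ x then -2 * τ * x else -2 * (1 - τ) * x

open Set

@[fun_prop]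
lemma measurable_gExp (τ : ℝ) : Measurable (gExp τ) :=
  Measurable.ite measurableSet_Ici (by fun_prop) (by fun_prop)

lemma abs_gExp_le (τ x : ℝ) : |gExp τ x| ≤ 2 * (|τ| + |1 - τ|) * |x| := by
  have hτ : 0 ≤ |τ| := abs_nonneg τ
  have hτ' : 0 ≤ |1 - τ| := abs_nonneg (1 - τ)
  unfold gExp
  split_ifs <;> simp only [abs_mul, abs_neg, abs_two] <;> nlinarith [abs_nonneg x]

lemma MeasureTheory.Integrable.gExp_comp {Ω : Type*} [MeasurableSpace Ω] {μ : Measure Ω}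
    {f : Ω → ℝ} (hf : Integrable f μ) (τ : ℝ) : Integrable (fun ω => gExp τ (f ω)) μ :=
  Integrable.mono' (hf.abs.const_mul _)
    ((measurable_gExp τ).comp_aemeasurable hf.aemeasurable).aestronglyMeasurable
    (Filter.Eventually.of_forall fun ω => abs_gExp_le τ (f ω))

lemma integral_gExp_mul_eq_zero_of_indepFun {Ω : Type*} [MeasurableSpace Ω] {μ : Measure Ω}
    {τ : ℝ} {ε Z : Ω → ℝ} (hε : Measurable ε) (hZ : Measurable Z)
    (hind : IndepFun ε Z μ) (hg : ∫ ω, gExp τ (ε ω) ∂μ = 0) :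
    ∫ ω, gExp τ (ε ω) * Z ω ∂μ = 0 := by
  have hind' : IndepFun (fun ω => gExp τ (ε ω)) Z μ :=
    hind.comp (measurable_gExp τ) measurable_id
  rw [hind'.integral_fun_mul_eq_mul_integral ((measurable_gExp τ).comp hε).aestronglyMeasurable
    hZ.aestronglyMeasurable]
  exact mul_eq_zero_of_left hg _

lemma measure_singleton_eq_zero_of_continuousAt {ν : Measure ℝ} [IsProbabilityMeasure ν]
    {s : ℝ} (h : ContinuousAt (fun t => ν.real (Ioi t)) s) : ν {s} = 0 := by
  have hcdf : ContinuousAt (cdf ν) s := by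
    have : cdf ν = fun t => 1 - ν.real (Ioi t) := by
      ext t
      rw [cdf_eq_real, ← compl_Iic, probReal_compl_eq_one_sub measurableSet_Iic, sub_sub_cancel]
    rw [this]
    exact continuousAt_const.sub h
  rw [← measure_cdf ν, StieltjesFunction.measure_singleton,
    hcdf.continuousWithinAt.leftLim_eq, sub_self, ENNReal.ofReal_zero]

lemma measureReal_Ici_eq_measureReal_Ioi {ν : Measure ℝ} [IsProbabilityMeasure ν] {s : ℝ}
    (h : ContinuousAt (fun t => ν.real (Ioi t)) s) : ν.real (Ici s) = ν.real (Ioi s) :=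
  measureReal_congr (Ioi_ae_eq_Ici' (measure_singleton_eq_zero_of_continuousAt h)).symm

/-- The inverse-probability-of-censoring weight `1_{t ≤ c} / P(C ≥ t)` when `C` has law `ν`. -/
def ipcwWeight (ν : Measure ℝ) (t c : ℝ) : ℝ := if t ≤ c then (ν.real (Ici t))⁻¹ else 0

section ipcwWeight

variable {ν : Measure ℝ}

lemma measurable_measureReal_Ici [IsFiniteMeasure ν] : Measurable fun t => ν.real (Ici t) :=
  Antitone.measurable fun _ _ hab => measureReal_mono (Ici_subset_Ici.2 hab)

lemma measurable_ipcwWeight [IsFiniteMeasure ν] :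
    Measurable (fun w : ℝ × ℝ => ipcwWeight ν w.1 w.2) :=
  Measurable.ite (measurableSet_le measurable_fst measurable_snd)
    (measurable_measureReal_Ici.comp measurable_fst).inv measurable_const

lemma ipcwWeight_nonneg (t c : ℝ) : 0 ≤ ipcwWeight ν t c := by
  unfold ipcwWeight; split_ifs <;> positivity

lemma ipcwWeight_le {ζ t : ℝ} (hζ : 0 < ζ) (ht : ζ ≤ ν.real (Ici t)) (c : ℝ) :
    ipcwWeight ν t c ≤ ζ⁻¹ := by
  unfold ipcwWeight; split_ifs
  · exact inv_anti₀ hζ ht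
  · positivity

lemma integral_ipcwWeight {t : ℝ} (ht : ν.real (Ici t) ≠ 0) :
    ∫ c, ipcwWeight ν t c ∂ν = 1 := by
  have : (fun c => ipcwWeight ν t c) = (Ici t).indicator fun _ => (ν.real (Ici t))⁻¹ := by
    ext c; simp [ipcwWeight, indicator]
  rw [this, integral_indicator_const _ measurableSet_Ici, smul_eq_mul, mul_inv_cancel₀ ht]

theorem integral_prod_ipcwWeight_mul [IsFiniteMeasure ν] {κ : Measure (ℝ × ℝ)} [SFinite κ]
    {ζ : ℝ} (hζ : 0 < ζ) (hG : ∀ᵐ z ∂κ, ζ ≤ ν.real (Ici z.1))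
    (hV : Integrable Prod.snd κ) :
    ∫ w, ipcwWeight ν w.2.1 w.1 * w.2.2 ∂(ν.prod κ) = ∫ z, z.2 ∂κ := by
  have hmeas : Measurable fun w : ℝ × ℝ × ℝ => ipcwWeight ν w.2.1 w.1 :=
    measurable_ipcwWeight.comp (measurable_snd.fst.prodMk measurable_fst)
  have hint :
      Integrable (fun w : ℝ × ℝ × ℝ => ipcwWeight ν w.2.1 w.1 * w.2.2) (ν.prod κ) := by
    refine (hV.comp_snd ν).bdd_mul (c := ζ⁻¹) hmeas.aestronglyMeasurable ?_
    filter_upwards [Measure.quasiMeasurePreserving_snd.ae hG] with w hw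
    rw [Real.norm_of_nonneg (ipcwWeight_nonneg _ _)]
    exact ipcwWeight_le hζ hw _
  rw [integral_prod_symm _ hint]
  refine integral_congr_ae ?_
  filter_upwards [hG] with z hz
  rw [integral_mul_const, integral_ipcwWeight (hζ.trans_le hz).ne', one_mul]

end ipcwWeight

theorem integral_ipcwWeight_mul_of_indepFun {Ω : Type*} [MeasurableSpace Ω] {μ : Measure Ω}
    [IsProbabilityMeasure μ] {C T V : Ω → ℝ} (hC : Measurable C) (hT : Measurable T)
    (hV : Measurable V) (hind : IndepFun C (fun ω => (T ω, V ω)) μ) (hVi : Integrable V μ)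
    {ζ : ℝ} (hζ : 0 < ζ) (hG : ∀ᵐ ω ∂μ, ζ ≤ (μ.map C).real (Ici (T ω))) :
    ∫ ω, ipcwWeight (μ.map C) (T ω) (C ω) * V ω ∂μ = ∫ ω, V ω ∂μ := by
  have hTV : Measurable fun ω => (T ω, V ω) := hT.prodMk hV
  have hlaw :
      μ.map (fun ω => (C ω, T ω, V ω)) = (μ.map C).prod (μ.map fun ω => (T ω, V ω)) :=
    (indepFun_iff_map_prod_eq_prod_map_map hC.aemeasurable hTV.aemeasurable).1 hind
  have hmeas : Measurable fun w : ℝ × ℝ × ℝ => ipcwWeight (μ.map C) w.2.1 w.1 * w.2.2 :=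
    (measurable_ipcwWeight.comp (measurable_snd.fst.prodMk measurable_fst)).mul
      measurable_snd.snd
  calc ∫ ω, ipcwWeight (μ.map C) (T ω) (C ω) * V ω ∂μ
      = ∫ w, ipcwWeight (μ.map C) w.2.1 w.1 * w.2.2 ∂(μ.map fun ω => (C ω, T ω, V ω)) :=
        (integral_map (hC.prodMk hTV).aemeasurable hmeas.aestronglyMeasurable).symm
    _ = ∫ z, z.2 ∂(μ.map fun ω => (T ω, V ω)) := by
        rw [hlaw]
        refine integral_prod_ipcwWeight_mul hζ ?_ ?_
        · exact (ae_map_iff hTV.aemeasurable (measurableSet_le measurable_const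
            (measurable_measureReal_Ici.comp measurable_fst))).2 hG
        · exact (integrable_map_measure measurable_snd.aestronglyMeasurable
            hTV.aemeasurable).2 hVi
    _ = ∫ ω, V ω ∂μ := integral_map hTV.aemeasurable measurable_snd.aestronglyMeasurable

theorem censored_expectile_score_mean_zero_general
    {Ω : Type*} [MeasurableSpace Ω] (μ : Measure Ω) [IsProbabilityMeasure μ]
    {p : ℕ} (τ : ℝ)
    (X : Ω → Fin p → ℝ) (ε : Ω → ℝ) (C : Ω → ℝ)
    (hXm : Measurable X) (hεm : Measurable ε) (hCm : Measurable C)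
    (hXbd : ∃ c : ℝ, ∀ᵐ ω ∂μ, ∀ j, |X ω j| ≤ c)
    (hIndεX : IndepFun ε X μ)
    (hε2 : Integrable (fun ω => ε ω ^ 2) μ)
    (hgmean : (∫ ω, gExp τ (ε ω) ∂μ) = 0)
    (hIndC : IndepFun C (fun ω => (ε ω, X ω)) μ)
    (β0 : Fin p → ℝ)
    (T : Ω → ℝ) (hT : ∀ ω, T ω = Real.exp ((∑ j, X ω j * β0 j) + ε ω))
    (δ : Ω → ℝ) (hδ : ∀ ω, δ ω = if T ω ≤ C ω then 1 else 0)
    (Y : Ω → ℝ) (hY : ∀ ω, Y ω = min (T ω) (C ω))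
    (G0 : ℝ → ℝ) (hG0 : ∀ t, G0 t = (μ {ω | t < C ω}).toReal)
    (hG0cont : Continuous G0)
    (ζ0 : ℝ) (hζ0 : 0 < ζ0) (hG0T : ∀ᵐ ω ∂μ, ζ0 ≤ G0 (T ω)) :
    ∀ j, (∫ ω, (δ ω / G0 (Y ω)) * gExp τ (ε ω) * X ω j ∂μ) = 0 := by
  intro j
  obtain ⟨c, hc⟩ := hXbd
  have hG0_eq : ∀ t, G0 t = (μ.map C).real (Ici t) := by
    have hG0_map : G0 = fun t => (μ.map C).real (Ioi t) := by
      ext t; rw [hG0, map_measureReal_apply hCm measurableSet_Ioi]; rfl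
    have := Measure.isProbabilityMeasure_map (μ := μ) hCm.aemeasurable
    intro t
    rw [measureReal_Ici_eq_measureReal_Ioi (hG0_map ▸ hG0cont.continuousAt), hG0_map]
  have hweight : ∀ ω, δ ω / G0 (Y ω) = ipcwWeight (μ.map C) (T ω) (C ω) := by
    intro ω
    rw [hδ, hY, ipcwWeight]
    split_ifs with h
    · rw [min_eq_left h, hG0_eq, one_div]
    · rw [zero_div]
  have hXj : Measurable fun ω => X ω j := (measurable_pi_apply j).comp hXm
  have hT_meas : Measurable T := by
    rw [funext hT]; fun_prop
  have hindTV : IndepFun C (fun ω => (T ω, gExp τ (ε ω) * X ω j)) μ := by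
    simp only [hT]
    exact hIndC.comp (φ := id)
      (ψ := fun z : ℝ × (Fin p → ℝ) =>
        (Real.exp (∑ k, z.2 k * β0 k + z.1), gExp τ z.1 * z.2 j))
      measurable_id (by fun_prop)
  have hεi : Integrable ε μ :=
    ((memLp_two_iff_integrable_sq hεm.aestronglyMeasurable).2 hε2).integrable one_le_two
  have hVi : Integrable (fun ω => gExp τ (ε ω) * X ω j) μ :=
    (hεi.gExp_comp τ).mul_bdd (c := c) hXj.aestronglyMeasurable
      (by filter_upwards [hc] with ω hω using hω j)
  calc ∫ ω, (δ ω / G0 (Y ω)) * gExp τ (ε ω) * X ω j ∂μ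
      = ∫ ω, ipcwWeight (μ.map C) (T ω) (C ω) * (gExp τ (ε ω) * X ω j) ∂μ := by
        simp only [hweight, mul_assoc]
    _ = ∫ ω, gExp τ (ε ω) * X ω j ∂μ :=
        integral_ipcwWeight_mul_of_indepFun hCm hT_meas (((measurable_gExp τ).comp hεm).mul hXj)
          hindTV hVi hζ0 (by simpa only [hG0_eq] using hG0T)
    _ = 0 := integral_gExp_mul_eq_zero_of_indepFun hεm hXj
        (hIndεX.comp measurable_id (measurable_pi_apply j)) hgmean

/-- in the AFT model with `T = exp(X^⊤β⁰ + ε)`, `δ = 1_{T≤C}`,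
`Y = min(T,C)`, if `X` is a.s. bounded, `ε` is independent of `X` with
`E[ε²] < ∞` and `E[g_τ(ε)] = 0`, `C` is independent of `(ε, X)`,
`G₀(t) = P(C > t)` is continuous with `G₀(T) ≥ ζ₀ > 0` a.s., then the
inverse-probability-of-censoring weighted expectile score has mean zero:
`E[(δ / G₀(Y)) g_τ(ε) X] = 0` componentwise. -/
theorem censored_expectile_score_mean_zero
    {Ω : Type*} [MeasurableSpace Ω] (μ : Measure Ω) [IsProbabilityMeasure μ]
    {p : ℕ} (τ : ℝ) (hτ : τ ∈ Set.Ioo (0 : ℝ) 1)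
    (X : Ω → Fin p → ℝ) (ε : Ω → ℝ) (C : Ω → ℝ)
    (hXm : Measurable X) (hεm : Measurable ε) (hCm : Measurable C)
    (hXbd : ∃ c : ℝ, ∀ᵐ ω ∂μ, ∀ j, |X ω j| ≤ c)
    (hIndεX : IndepFun ε X μ)
    (hε2 : Integrable (fun ω => ε ω ^ 2) μ)
    (hgmean : (∫ ω, gExp τ (ε ω) ∂μ) = 0)
    (hIndC : IndepFun C (fun ω => (ε ω, X ω)) μ)
    (β0 : Fin p → ℝ)
    (T : Ω → ℝ) (hT : ∀ ω, T ω = Real.exp ((∑ j, X ω j * β0 j) + ε ω))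
    (δ : Ω → ℝ) (hδ : ∀ ω, δ ω = if T ω ≤ C ω then 1 else 0)
    (Y : Ω → ℝ) (hY : ∀ ω, Y ω = min (T ω) (C ω))
    (G0 : ℝ → ℝ) (hG0 : ∀ t, G0 t = (μ {ω | t < C ω}).toReal)
    (hG0cont : Continuous G0)
    (ζ0 : ℝ) (hζ0 : 0 < ζ0) (hG0T : ∀ᵐ ω ∂μ, ζ0 ≤ G0 (T ω)) :
    ∀ j, (∫ ω, (δ ω / G0 (Y ω)) * gExp τ (ε ω) * X ω j ∂μ) = 0 :=
  censored_expectile_score_mean_zero_general μ τ X ε C hXm hεm hCm hXbd hIndεX hε2 hgmean hIndC β0 T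
    hT δ hδ Y hY G0 hG0 hG0cont ζ0 hζ0 hG0T
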